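/- Let (F, Ψ₊, Ψ₋) be an SU(3)-structure on M⁶ and define on M⁶ × (0,π) the 3-form φ = sin²q F∧dq - sin³q(-cos q Ψ₊ + sin q Ψ₋) and the 4-form *φ = ½ sin⁴q F∧F + sin³q(sin q Ψ₊ + cos q Ψ₋)∧dq. Then dφ = 4*φ holds if and only if dF = 3Ψ₊ and dΨ₋ = -2F∧F. -/

import Mathlib

open Real

variable {A : Type*}

/-- A form on `M⁶ × ℝ` is a pair `(α, β)` of `q`-dependent forms on `M⁶`, standing for
`α(q) + β(q) ∧ dq`.  `dProd d k` is the exterior derivative on the product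
(`k` = degree of the `dq`-free part): `d(α + β∧dq) = dα + ((-1)^k ∂_qα + dβ) ∧ dq`. -/
noncomputable def dProd [NormedRing A] [NormedAlgebra ℝ A] (d : A →ₗ[ℝ] A) (k : ℕ)
    (ω : (ℝ → A) × (ℝ → A)) : (ℝ → A) × (ℝ → A) :=
  (fun q => d (ω.1 q), fun q => ((-1 : ℝ)) ^ k • deriv ω.1 q + d (ω.2 q))

/-! On the slice `q = π/2` (where `sin q = 1`, `cos q = 0`) the equation `dφ = 4*φ` is exactly
the pair of nearly Kähler equations. Conversely, for a nearly Kähler structure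
`dΨ₊ = d²F / 3 = 0`, and the remaining `q`-dependence of `dφ - 4*φ` cancels by
`sin² q + cos² q = 1`. -/

theorem apply_eq_zero_of_apply_eq_smul {R M : Type*} [DivisionRing R] [AddCommGroup M]
    [Module R M] (d : M →ₗ[R] M) (hdd : ∀ x, d (d x) = 0) {x y : M} {c : R} (hc : c ≠ 0)
    (h : d x = c • y) : d y = 0 := by
  have hx := hdd x
  rw [h, map_smul, smul_eq_zero] at hx
  exact hx.resolve_left hc

theorem hasDerivAt_sin_pow_three_smul {E : Type*} [NormedAddCommGroup E] [NormedSpace ℝ E]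
    (Ψp Ψm : E) (q : ℝ) :
    HasDerivAt (fun s => -(sin s ^ 3) • (-(cos s) • Ψp + sin s • Ψm))
      ((3 * sin q ^ 2 * cos q ^ 2 - sin q ^ 4) • Ψp - (4 * sin q ^ 3 * cos q) • Ψm) q := by
  have hsin := ((hasDerivAt_sin q).fun_pow 3).fun_neg
  have hvec := ((hasDerivAt_cos q).fun_neg.smul_const Ψp).fun_add
    ((hasDerivAt_sin q).smul_const Ψm)
  refine (hsin.smul hvec).congr_deriv ?_
  match_scalars <;> ring

theorem dProd_sinConeForm [NormedRing A] [NormedAlgebra ℝ A] (d : A →ₗ[ℝ] A)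
    (F Ψp Ψm : A) :
    dProd d 3
        (fun s => -(sin s ^ 3) • (-(cos s) • Ψp + sin s • Ψm), fun s => sin s ^ 2 • F) =
      (fun q => (sin q ^ 3 * cos q) • d Ψp - sin q ^ 4 • d Ψm,
       fun q => (sin q ^ 4 - 3 * sin q ^ 2 * cos q ^ 2) • Ψp + (4 * sin q ^ 3 * cos q) • Ψm
         + sin q ^ 2 • d F) := by
  simp only [dProd, (hasDerivAt_sin_pow_three_smul Ψp Ψm _).deriv, map_add, map_smul]
  congr 1 <;> funext q <;> module

theorem sinCone_nearlyParallelG2_iff_nearlyKaehler_general [NormedRing A] [NormedAlgebra ℝ A]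
    (d : A →ₗ[ℝ] A) (F Ψp Ψm : A)
    (hdd : ∀ x : A, d (d x) = 0) :
    ((∀ q ∈ Set.Ioo (0 : ℝ) π,
        (dProd d 3
          (fun s => -(sin s ^ 3) • (-(cos s) • Ψp + sin s • Ψm),
           fun s => sin s ^ 2 • F)).1 q
          = (4 : ℝ) • (((1 : ℝ) / 2 * sin q ^ 4) • (F * F)) ∧
        (dProd d 3
          (fun s => -(sin s ^ 3) • (-(cos s) • Ψp + sin s • Ψm),
           fun s => sin s ^ 2 • F)).2 q
          = (4 : ℝ) • (sin q ^ 3 • (sin q • Ψp + cos q • Ψm))) ↔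
      (d F = (3 : ℝ) • Ψp ∧ d Ψm = (-2 : ℝ) • (F * F))) := by
  simp only [dProd_sinConeForm]
  constructor
  · intro h
    obtain ⟨hfst, hsnd⟩ := h (π / 2) ⟨by positivity, by linarith [pi_pos]⟩
    simp only [sin_pi_div_two, cos_pi_div_two] at hfst hsnd
    exact ⟨by linear_combination (norm := module) hsnd,
      by linear_combination (norm := module) -hfst⟩
  · rintro ⟨hF, hΨm⟩ q -
    have hΨp : d Ψp = 0 := apply_eq_zero_of_apply_eq_smul d hdd three_ne_zero hF
    rw [hF, hΨm, hΨp]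
    have hpyth := sin_sq_add_cos_sq q
    constructor
    · module
    · match_scalars
      · linear_combination -3 * sin q ^ 2 * hpyth
      · ring

/-- For an SU(3)-structure `(F, Ψ₊, Ψ₋)` on `M⁶` define on `M⁶ × (0,π)` the
3-form `φ = sin²q F∧dq - sin³q(-cos q Ψ₊ + sin q Ψ₋)` and the 4-form
`*φ = ½ sin⁴q F∧F + sin³q(sin q Ψ₊ + cos q Ψ₋)∧dq`.  Then `dφ = 4*φ` if and only if
`dF = 3Ψ₊` and `dΨ₋ = -2F∧F`: an SU(3)-manifold is nearly Kähler iff its sin-cone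
G₂-structure is nearly parallel. -/
theorem sinCone_nearlyParallelG2_iff_nearlyKaehler [NormedRing A] [NormedAlgebra ℝ A]
    (d : A →ₗ[ℝ] A) (F Ψp Ψm : A)
    (hdd : ∀ x : A, d (d x) = 0)
    -- SU(3)-compatibility: F ∧ Ψ± = 0
    (hFp : F * Ψp = 0) (hFm : F * Ψm = 0) :
    ((∀ q ∈ Set.Ioo (0 : ℝ) π,
        (dProd d 3
          (fun s => -(sin s ^ 3) • (-(cos s) • Ψp + sin s • Ψm),
           fun s => sin s ^ 2 • F)).1 q
          = (4 : ℝ) • (((1 : ℝ) / 2 * sin q ^ 4) • (F * F)) ∧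
        (dProd d 3
          (fun s => -(sin s ^ 3) • (-(cos s) • Ψp + sin s • Ψm),
           fun s => sin s ^ 2 • F)).2 q
          = (4 : ℝ) • (sin q ^ 3 • (sin q • Ψp + cos q • Ψm))) ↔
      (d F = (3 : ℝ) • Ψp ∧ d Ψm = (-2 : ℝ) • (F * F))) :=
  sinCone_nearlyParallelG2_iff_nearlyKaehler_general d F Ψp Ψm hdd
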